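/- Let I ⊆ ℝ be an open interval, let γ : I → ℝ² be a C¹ curve parametrized by arc length with unit tangent τ(s) = γ'(s), and let n : I → ℝ² be a differentiable map of unit vectors with τ(s) = (−n₂(s), n₁(s)) and n'(s) = κ(s) τ(s) for a function κ : I → ℝ. Let v : ℝ² → ℝ² be C¹ with v(γ(s)) · n(s) = 0 for all s ∈ I, let α : I → ℝ, and suppose ω(v)(γ(s)) = (2κ(s) − α(s)) (v(γ(s)) · τ(s)) for all s ∈ I. Then for every s ∈ I and every vector u ∈ ℝ² parallel to τ(s) (i.e., u = c τ(s) for some c ∈ ℝ), one has (Dv(γ(s)) n(s)) · u = (κ(s) − α(s)) (v(γ(s)) · u). -/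

import Mathlib

noncomputable section

/-- Dot product on `ℝ²` (realized as `Fin 2 → ℝ`). -/
def dot2 (u w : Fin 2 → ℝ) : ℝ := u 0 * w 0 + u 1 * w 1

/-- Vorticity `ω(v)(x) = ∂₁v²(x) − ∂₂v¹(x)` (components indexed `0,1`). -/
def vort (v : (Fin 2 → ℝ) → Fin 2 → ℝ) (x : Fin 2 → ℝ) : ℝ :=
  fderiv ℝ v x (Pi.single 0 1) 1 - fderiv ℝ v x (Pi.single 1 1) 0

/-!
Write `L = Dv(γ(s))`. Differentiating the tangency relation `v(γ) · n = 0` along the curve gives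
`(L τ) · n + κ (v · τ) = 0`. The vorticity is the antisymmetric part of `L` read in any positively
oriented orthonormal frame, so `ω = (L n) · τ − (L τ) · n`. Together with the hypothesis on `ω`
this yields `(L n) · τ = (κ − α) (v · τ)`, and the claim for `u = c τ` follows by linearity.
-/

lemma dot2_smul_right (c : ℝ) (u w : Fin 2 → ℝ) : dot2 u (c • w) = c * dot2 u w := by
  simp only [dot2, Pi.smul_apply, smul_eq_mul]
  ring

theorem HasDerivAt.dot2 {f g : ℝ → Fin 2 → ℝ} {f' g' : Fin 2 → ℝ} {t : ℝ}
    (hf : HasDerivAt f f' t) (hg : HasDerivAt g g' t) :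
    HasDerivAt (fun t => dot2 (f t) (g t)) (dot2 f' (g t) + dot2 (f t) g') t := by
  have coord {h : ℝ → Fin 2 → ℝ} {h' : Fin 2 → ℝ} (hh : HasDerivAt h h' t) (i : Fin 2) :
      HasDerivAt (fun t => h t i) (h' i) t :=
    (ContinuousLinearMap.proj (R := ℝ) (φ := fun _ : Fin 2 => ℝ) i).hasFDerivAt.comp_hasDerivAt
      t hh
  exact (((coord hf 0).mul (coord hg 0)).add ((coord hf 1).mul (coord hg 1))).congr_deriv
    (by simp only [_root_.dot2]; ring)

lemma dot2_fderiv_tangent_normal {v : (Fin 2 → ℝ) → Fin 2 → ℝ} {γ n : ℝ → Fin 2 → ℝ}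
    {τ : Fin 2 → ℝ} {κ s : ℝ} (hγ : HasDerivAt γ τ s) (hn : HasDerivAt n (κ • τ) s)
    (hv : DifferentiableAt ℝ v (γ s)) (htang : ∀ᶠ t in nhds s, dot2 (v (γ t)) (n t) = 0) :
    dot2 (fderiv ℝ v (γ s) τ) (n s) = -(κ * dot2 (v (γ s)) τ) := by
  have hderiv := (hv.hasFDerivAt.comp_hasDerivAt s hγ).dot2 hn
  have hzero : HasDerivAt (fun t => dot2 (v (γ t)) (n t)) 0 s :=
    (hasDerivAt_const s (0 : ℝ)).congr_of_eventuallyEq htang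
  have := hderiv.unique hzero
  rw [dot2_smul_right, Function.comp_apply] at this
  linear_combination this

lemma dot2_apply_rot_sub (L : (Fin 2 → ℝ) →L[ℝ] Fin 2 → ℝ) (w : Fin 2 → ℝ) :
    dot2 (L w) ![-w 1, w 0] - dot2 (L ![-w 1, w 0]) w =
      dot2 w w * (L (Pi.single 0 1) 1 - L (Pi.single 1 1) 0) := by
  have hL (x : Fin 2 → ℝ) (i : Fin 2) :
      L x i = x 0 * L (Pi.single 0 1) i + x 1 * L (Pi.single 1 1) i := by
    conv_lhs =>
      rw [show x = x 0 • Pi.single 0 1 + x 1 • Pi.single 1 1 by ext j; fin_cases j <;> simp]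
    simp only [map_add, map_smul, Pi.add_apply, Pi.smul_apply, smul_eq_mul]
  simp only [dot2]
  rw [hL w 0, hL w 1, hL ![-w 1, w 0] 0, hL ![-w 1, w 0] 1]
  simp only [Matrix.cons_val_zero, Matrix.cons_val_one]
  ring

theorem grad_n_dot_parallel_general (a b : ℝ) (γ τ n : ℝ → Fin 2 → ℝ) (κ α : ℝ → ℝ)
    (v : (Fin 2 → ℝ) → Fin 2 → ℝ)
    (hγ : ∀ s ∈ Set.Ioo a b, HasDerivAt γ (τ s) s)
    (hnunit : ∀ s ∈ Set.Ioo a b, dot2 (n s) (n s) = 1)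
    (hτdef : ∀ s ∈ Set.Ioo a b, τ s = ![-(n s 1), n s 0])
    (hn' : ∀ s ∈ Set.Ioo a b, HasDerivAt n (κ s • τ s) s)
    (hv : ContDiff ℝ 1 v)
    (htang : ∀ s ∈ Set.Ioo a b, dot2 (v (γ s)) (n s) = 0)
    (hω : ∀ s ∈ Set.Ioo a b,
      vort v (γ s) = (2 * κ s - α s) * dot2 (v (γ s)) (τ s)) :
    ∀ s ∈ Set.Ioo a b, ∀ u : Fin 2 → ℝ, (∃ c : ℝ, u = c • τ s) →
      dot2 (fderiv ℝ v (γ s) (n s)) u = (κ s - α s) * dot2 (v (γ s)) u := by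
  rintro s hs _ ⟨c, rfl⟩
  have hτn := dot2_fderiv_tangent_normal (hγ s hs) (hn' s hs)
    (hv.differentiable one_ne_zero (γ s))
    (Filter.eventually_of_mem (isOpen_Ioo.mem_nhds hs) htang)
  have hvort := dot2_apply_rot_sub (fderiv ℝ v (γ s)) (n s)
  rw [← hτdef s hs, hnunit s hs, one_mul, ← vort, hω s hs] at hvort
  rw [dot2_smul_right, dot2_smul_right]
  linear_combination c * hvort + c * hτn

/-- Along a `C¹` arc-length curve `γ` in the open interval `(a,b)`, with unit normal `n`,
positively-oriented tangent `τ = (−n₂, n₁) = γ'` and `n' = κ τ`, if a `C¹` vector field `v`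
is tangent to the curve and satisfies `ω(v)(γ(s)) = (2κ(s) − α(s)) (v(γ(s)) ⬝ τ(s))`, then
for every vector `u` parallel to `τ(s)`,
`(Dv(γ(s)) n(s)) ⬝ u = (κ(s) − α(s)) (v(γ(s)) ⬝ u)`. -/
theorem grad_n_dot_parallel (a b : ℝ) (γ τ n : ℝ → Fin 2 → ℝ) (κ α : ℝ → ℝ)
    (v : (Fin 2 → ℝ) → Fin 2 → ℝ)
    (hγ : ∀ s ∈ Set.Ioo a b, HasDerivAt γ (τ s) s)
    (hτcont : ContinuousOn τ (Set.Ioo a b))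
    (hτunit : ∀ s ∈ Set.Ioo a b, dot2 (τ s) (τ s) = 1)
    (hnunit : ∀ s ∈ Set.Ioo a b, dot2 (n s) (n s) = 1)
    (hτdef : ∀ s ∈ Set.Ioo a b, τ s = ![-(n s 1), n s 0])
    (hn' : ∀ s ∈ Set.Ioo a b, HasDerivAt n (κ s • τ s) s)
    (hv : ContDiff ℝ 1 v)
    (htang : ∀ s ∈ Set.Ioo a b, dot2 (v (γ s)) (n s) = 0)
    (hω : ∀ s ∈ Set.Ioo a b,
      vort v (γ s) = (2 * κ s - α s) * dot2 (v (γ s)) (τ s)) :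
    ∀ s ∈ Set.Ioo a b, ∀ u : Fin 2 → ℝ, (∃ c : ℝ, u = c • τ s) →
      dot2 (fderiv ℝ v (γ s) (n s)) u = (κ s - α s) * dot2 (v (γ s)) u :=
  grad_n_dot_parallel_general a b γ τ n κ α v hγ hnunit hτdef hn' hv htang hω

end
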